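/- arXiv:1104.0992 — 4 statements merged into one kernel-verified Lean document; each statement's English description precedes it below -/
import Mathlib

section
/- Fix a subset I ⊆ J such that Σ_{k ∈ π₁(I)} (N_k − d_k) d_k + Σ_{j ∈ π₂(I)} (M_j − d_j) d_j < Σ_{(k,j) ∈ I} d_k d_j, and fix arbitrary matrices H²_{kj}, H³_{kj}, H⁴_{kj} for all (k,j) ∈ I. Then there exists a nonzero polynomial p in the entries of the matrices (H¹_{kj})_{(k,j)∈I} (nonzero element of the multivariate polynomial ring over ℂ in those variables) such that: for every choice of matrices (H¹_{kj})_{(k,j)∈I}, if the reduced interference-alignment system on I has a solution (Ū_k, V̄_k), then p vanishes at the entries of (H¹_{kj})_{(k,j)∈I}. -/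
/-! Writing `Ūₖᴴ` instead of `Ūₖ` as the unknown, each entry of `H¹_{kj}` in a solvable system
equals a polynomial (with coefficients from `H², H³, H⁴`) evaluated at the entries of the solution.
There are fewer unknown entries than entries of `(H¹_{kj})`, and the polynomial ring in `n`
variables has transcendence degree `n`, so these polynomials satisfy a nonzero algebraic relation
`p`; it vanishes at every `H¹` for which the system is solvable. -/

open Matrix

namespace MvPolynomial

variable {R σ τ : Type*} [CommRing R] [IsDomain R] [Fintype σ] [Fintype τ]

theorem exists_ne_zero_aeval_eq_zero_of_card_lt (f : τ → MvPolynomial σ R)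
    (h : Fintype.card σ < Fintype.card τ) : ∃ p : MvPolynomial τ R, p ≠ 0 ∧ aeval f p = 0 := by
  by_contra! hdep
  have hind : AlgebraicIndependent R f := algebraicIndependent_iff.mpr fun p hp => by
    by_contra hp0
    exact hdep p hp0 hp
  have := hind.lift_cardinalMk_le_trdeg
  simp only [trdeg_of_isDomain, Cardinal.mk_fintype, Cardinal.lift_natCast] at this
  norm_cast at this
  omega

theorem exists_ne_zero_eval_comp_eq_zero_of_card_lt (f : τ → MvPolynomial σ R)
    (h : Fintype.card σ < Fintype.card τ) :
    ∃ p : MvPolynomial τ R, p ≠ 0 ∧ ∀ x : σ → R, eval (fun i => eval x (f i)) p = 0 := by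
  obtain ⟨p, hp0, hp⟩ := exists_ne_zero_aeval_eq_zero_of_card_lt f h
  refine ⟨p, hp0, fun x => ?_⟩
  rw [aeval_eq_bind₁] at hp
  simpa only [eval, eval₂Hom_bind₁, map_zero] using congrArg (eval x) hp

end MvPolynomial

noncomputable section AlignmentSystem

open MvPolynomial

variable {K : ℕ} {M N d : Fin K → ℕ} {I : Finset (Fin K × Fin K)}

variable (M N d I) in
abbrev AlignmentUnknown : Type :=
  (Σ k : I.image Prod.fst, Fin (N k - d k) × Fin (d k)) ⊕
    (Σ j : I.image Prod.snd, Fin (M j - d j) × Fin (d j))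

variable (M N d) in
def genericUbarConjTranspose {q : Fin K × Fin K} (hq : q ∈ I) :
    Matrix (Fin (d q.1)) (Fin (N q.1 - d q.1)) (MvPolynomial (AlignmentUnknown M N d I) ℂ) :=
  fun a l => X (Sum.inl ⟨⟨q.1, Finset.mem_image_of_mem _ hq⟩, (l, a)⟩)

variable (M N d) in
def genericVbar {q : Fin K × Fin K} (hq : q ∈ I) :
    Matrix (Fin (M q.2 - d q.2)) (Fin (d q.2)) (MvPolynomial (AlignmentUnknown M N d I) ℂ) :=
  fun l b => X (Sum.inr ⟨⟨q.2, Finset.mem_image_of_mem _ hq⟩, (l, b)⟩)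

variable (H2 : ∀ q : Fin K × Fin K, q ∈ I → Matrix (Fin (d q.1)) (Fin (M q.2 - d q.2)) ℂ)
    (H3 : ∀ q : Fin K × Fin K, q ∈ I → Matrix (Fin (N q.1 - d q.1)) (Fin (d q.2)) ℂ)
    (H4 : ∀ q : Fin K × Fin K, q ∈ I →
      Matrix (Fin (N q.1 - d q.1)) (Fin (M q.2 - d q.2)) ℂ)

def genericResidual {q : Fin K × Fin K} (hq : q ∈ I) :
    Matrix (Fin (d q.1)) (Fin (d q.2)) (MvPolynomial (AlignmentUnknown M N d I) ℂ) :=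
  let U := genericUbarConjTranspose M N d hq
  let V := genericVbar M N d hq
  let c : ℂ →+* MvPolynomial (AlignmentUnknown M N d I) ℂ := C
  U * (H3 q hq).map c + (H2 q hq).map c * V + U * (H4 q hq).map c * V

def alignmentPoly :
    (Σ q : I, Fin (d q.1.1) × Fin (d q.1.2)) → MvPolynomial (AlignmentUnknown M N d I) ℂ
  | ⟨⟨_, hq⟩, (a, b)⟩ => -genericResidual H2 H3 H4 hq a b

def solutionPoint (Ubar : ∀ k, Matrix (Fin (N k - d k)) (Fin (d k)) ℂ)
    (Vbar : ∀ k, Matrix (Fin (M k - d k)) (Fin (d k)) ℂ) : AlignmentUnknown M N d I → ℂ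
  | Sum.inl ⟨k, (l, a)⟩ => star (Ubar k l a)
  | Sum.inr ⟨j, (l, b)⟩ => Vbar j l b

variable (Ubar : ∀ k, Matrix (Fin (N k - d k)) (Fin (d k)) ℂ)
    (Vbar : ∀ k, Matrix (Fin (M k - d k)) (Fin (d k)) ℂ)

theorem map_eval_genericUbarConjTranspose {q : Fin K × Fin K} (hq : q ∈ I) :
    (genericUbarConjTranspose M N d hq).map (eval (solutionPoint Ubar Vbar)) = (Ubar q.1)ᴴ := by
  ext a l
  simp [genericUbarConjTranspose, solutionPoint]

theorem map_eval_genericVbar {q : Fin K × Fin K} (hq : q ∈ I) :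
    (genericVbar M N d hq).map (eval (solutionPoint Ubar Vbar)) = Vbar q.2 := by
  ext l b
  simp [genericVbar, solutionPoint]

theorem map_eval_genericResidual {q : Fin K × Fin K} (hq : q ∈ I) :
    (genericResidual H2 H3 H4 hq).map (eval (solutionPoint Ubar Vbar)) =
      (Ubar q.1)ᴴ * H3 q hq + H2 q hq * Vbar q.2 + (Ubar q.1)ᴴ * H4 q hq * Vbar q.2 := by
  simp only [genericResidual, Matrix.map_add _ (map_add _), Matrix.map_mul,
    map_eval_genericUbarConjTranspose, map_eval_genericVbar, Matrix.map_map]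
  simp [Function.comp_def]

theorem eval_alignmentPoly_of_solution
    (H1 : ∀ q : Fin K × Fin K, q ∈ I → Matrix (Fin (d q.1)) (Fin (d q.2)) ℂ)
    (hsol : ∀ q (hq : q ∈ I), H1 q hq + (Ubar q.1)ᴴ * H3 q hq + H2 q hq * Vbar q.2
      + (Ubar q.1)ᴴ * H4 q hq * Vbar q.2 = 0)
    (v : Σ q : I, Fin (d q.1.1) × Fin (d q.1.2)) :
    eval (solutionPoint Ubar Vbar) (alignmentPoly H2 H3 H4 v) = H1 v.1.1 v.1.2 v.2.1 v.2.2 := by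
  obtain ⟨⟨q, hq⟩, a, b⟩ := v
  have hH1 : H1 q hq = -((Ubar q.1)ᴴ * H3 q hq + H2 q hq * Vbar q.2
      + (Ubar q.1)ᴴ * H4 q hq * Vbar q.2) := by
    rw [eq_neg_iff_add_eq_zero, ← hsol q hq]
    abel
  rw [hH1, ← map_eval_genericResidual]
  simp [alignmentPoly]

theorem card_alignmentUnknown :
    Fintype.card (AlignmentUnknown M N d I) = ∑ k ∈ I.image Prod.fst, (N k - d k) * d k
        + ∑ j ∈ I.image Prod.snd, (M j - d j) * d j := by
  simp only [Fintype.card_sum, Fintype.card_sigma, Fintype.card_prod, Fintype.card_fin]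
  exact congrArg₂ (· + ·) (Finset.sum_coe_sort _ fun k => (N k - d k) * d k)
    (Finset.sum_coe_sort _ fun j => (M j - d j) * d j)

theorem card_alignmentEntry :
    Fintype.card (Σ q : I, Fin (d q.1.1) × Fin (d q.1.2)) = ∑ q ∈ I, d q.1 * d q.2 := by
  simp only [Fintype.card_sigma, Fintype.card_prod, Fintype.card_fin]
  exact Finset.sum_coe_sort I fun q => d q.1 * d q.2

end AlignmentSystem

theorem stmt_1_general (K : ℕ) (M N d : Fin K → ℕ)
    (I : Finset (Fin K × Fin K))
    (hcount : ∑ k ∈ I.image Prod.fst, (N k - d k) * d k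
        + ∑ j ∈ I.image Prod.snd, (M j - d j) * d j
      < ∑ q ∈ I, d q.1 * d q.2)
    (H2 : ∀ q : Fin K × Fin K, q ∈ I → Matrix (Fin (d q.1)) (Fin (M q.2 - d q.2)) ℂ)
    (H3 : ∀ q : Fin K × Fin K, q ∈ I → Matrix (Fin (N q.1 - d q.1)) (Fin (d q.2)) ℂ)
    (H4 : ∀ q : Fin K × Fin K, q ∈ I →
      Matrix (Fin (N q.1 - d q.1)) (Fin (M q.2 - d q.2)) ℂ) :
    ∃ p : MvPolynomial
        (Σ q : {q : Fin K × Fin K // q ∈ I}, Fin (d q.1.1) × Fin (d q.1.2)) ℂ,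
      p ≠ 0 ∧
      ∀ H1 : ∀ q : Fin K × Fin K, q ∈ I → Matrix (Fin (d q.1)) (Fin (d q.2)) ℂ,
        (∃ (Ubar : ∀ k, Matrix (Fin (N k - d k)) (Fin (d k)) ℂ)
           (Vbar : ∀ k, Matrix (Fin (M k - d k)) (Fin (d k)) ℂ),
          ∀ q (hq : q ∈ I),
            H1 q hq + (Ubar q.1)ᴴ * H3 q hq + H2 q hq * Vbar q.2
              + (Ubar q.1)ᴴ * H4 q hq * Vbar q.2 = 0) →
        MvPolynomial.eval (fun v => H1 v.1.1 v.1.2 v.2.1 v.2.2) p = 0 := by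
  obtain ⟨p, hp0, hp⟩ := MvPolynomial.exists_ne_zero_eval_comp_eq_zero_of_card_lt
    (alignmentPoly H2 H3 H4) (by rwa [card_alignmentUnknown, card_alignmentEntry])
  refine ⟨p, hp0, ?_⟩
  rintro H1 ⟨Ubar, Vbar, hsol⟩
  have hH1 : (fun v => H1 v.1.1 v.1.2 v.2.1 v.2.2) =
      fun v => MvPolynomial.eval (solutionPoint Ubar Vbar) (alignmentPoly H2 H3 H4 v) :=
    funext fun v => (eval_alignmentPoly_of_solution H2 H3 H4 Ubar Vbar H1 hsol v).symm
  rw [hH1]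
  exact hp _

/-- For a subset `I ⊆ J` with fewer unknowns than equations and fixed
`H²,H³,H⁴`, there is a nonzero polynomial in the entries of `(H¹_{kj})_{(k,j)∈I}` that
vanishes whenever the reduced interference-alignment system on `I` has a solution. -/
theorem stmt_1 (K : ℕ) (hK : 2 ≤ K) (M N d : Fin K → ℕ)
    (hd1 : ∀ k, 1 ≤ d k) (hdM : ∀ k, d k ≤ M k) (hdN : ∀ k, d k ≤ N k)
    (I : Finset (Fin K × Fin K)) (hIJ : ∀ q ∈ I, q.1 ≠ q.2)
    (hcount : ∑ k ∈ I.image Prod.fst, (N k - d k) * d k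
        + ∑ j ∈ I.image Prod.snd, (M j - d j) * d j
      < ∑ q ∈ I, d q.1 * d q.2)
    (H2 : ∀ q : Fin K × Fin K, q ∈ I → Matrix (Fin (d q.1)) (Fin (M q.2 - d q.2)) ℂ)
    (H3 : ∀ q : Fin K × Fin K, q ∈ I → Matrix (Fin (N q.1 - d q.1)) (Fin (d q.2)) ℂ)
    (H4 : ∀ q : Fin K × Fin K, q ∈ I →
      Matrix (Fin (N q.1 - d q.1)) (Fin (M q.2 - d q.2)) ℂ) :
    ∃ p : MvPolynomial
        (Σ q : {q : Fin K × Fin K // q ∈ I}, Fin (d q.1.1) × Fin (d q.1.2)) ℂ,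
      p ≠ 0 ∧
      ∀ H1 : ∀ q : Fin K × Fin K, q ∈ I → Matrix (Fin (d q.1)) (Fin (d q.2)) ℂ,
        (∃ (Ubar : ∀ k, Matrix (Fin (N k - d k)) (Fin (d k)) ℂ)
           (Vbar : ∀ k, Matrix (Fin (M k - d k)) (Fin (d k)) ℂ),
          ∀ q (hq : q ∈ I),
            H1 q hq + (Ubar q.1)ᴴ * H3 q hq + H2 q hq * Vbar q.2
              + (Ubar q.1)ᴴ * H4 q hq * Vbar q.2 = 0) →
        MvPolynomial.eval (fun v => H1 v.1.1 v.1.2 v.2.1 v.2.2) p = 0 :=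
  stmt_1_general K M N d I hcount H2 H3 H4
end

section
/- Suppose d_k = d ≥ 1 for all k and K(K+1) d > Σ_{k=1}^{K} (M_k + N_k). Then there exists a nonzero polynomial p in the channel entries such that for every channel realization (H_{kj})_{(k,j)∈J} at which p does not vanish, there exists no linear interference-alignment solution on all of J. (Corollary 1(a): with equal degrees of freedom d per user, interference alignment is generically impossible unless d ≤ Σ_k (M_k + N_k) / (K(K+1)).) -/
/-!
Replacing `U_k` by `U_k A_k` and `V_k` by `V_k B_k` for invertible `A_k`, `B_k` does not affect
alignment, and a rank-`d` matrix can be normalized this way so that some `d` of its rows (the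
pivot rows) form the identity. After this normalization, the `(a, b)` entry of
`U_kᴴ H_kj V_j = 0` expresses the channel coefficient of `H_kj` in the `a`-th pivot row and the
`b`-th pivot column as a polynomial in the non-pivot entries of `U_k`, `V_j` and `H_kj`. So for
each of the finitely many choices of pivots, every alignable channel lies in the image of a
polynomial map in `Σ_k (N_k - d) d + Σ_k (M_k - d) d + (#channel entries - K(K-1) d²)`
variables, which is fewer than the number of channel entries exactly when
`Σ_k (M_k + N_k) < K(K+1) d`. Since `MvPolynomial σ ℂ` has transcendence degree `#σ`, the
coordinates of such a map satisfy a nonzero polynomial relation; the product of these relations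
over all pivot choices is the required polynomial.
-/

open Matrix MvPolynomial Cardinal

universe u

theorem MvPolynomial.exists_ne_zero_forall_eval_eq_zero_of_mk_lt {R σ ι : Type u}
    [CommRing R] [IsDomain R] (f : ι → MvPolynomial σ R) (h : #σ < #ι) :
    ∃ P : MvPolynomial ι R, P ≠ 0 ∧
      ∀ x : σ → R, eval (fun i => eval x (f i)) P = 0 := by
  by_contra! hf
  have hind : AlgebraicIndependent R f := by
    refine (algebraicIndependent_iff).2 fun P hP => by_contra fun hP0 => ?_
    obtain ⟨x, hx⟩ := hf P hP0
    have := congrArg (eval x) hP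
    rw [aeval_eq_bind₁, eval, eval₂Hom_bind₁, map_zero] at this
    exact hx this
  have := hind.cardinalMk_le_trdeg
  rw [MvPolynomial.trdeg_of_isDomain, lift_id] at this
  exact h.not_ge this

theorem Nat.card_subtype_add_card_subtype_not {α : Type*} [Finite α] (p : α → Prop) :
    Nat.card {x // p x} + Nat.card {x // ¬ p x} = Nat.card α := by
  classical
  rw [← Nat.card_sum, Nat.card_congr (Equiv.sumCompl p)]

theorem Nat.card_subtype_notMem_range_add {α β : Type*} [Finite α] (r : β ↪ α) :
    Nat.card {x // x ∉ Set.range r} + Nat.card β = Nat.card α := by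
  rw [← Nat.card_range_of_injective r.injective, add_comm,
    Nat.card_subtype_add_card_subtype_not]

namespace Matrix

section Rank

variable {F m n : Type*} [Field F] [Fintype m] [Fintype n] [DecidableEq n]

theorem exists_submatrix_isUnit_of_rank_eq_card (U : Matrix m n F)
    (hU : U.rank = Fintype.card n) : ∃ r : n ↪ m, IsUnit (U.submatrix r id) := by
  obtain ⟨κ, a, ha, hspan, hli⟩ := exists_linearIndependent' F U.row
  have : Fintype κ := Fintype.ofInjective a ha
  have hcard : Fintype.card κ = Fintype.card n := by
    rw [← hU, rank_eq_finrank_span_row, ← hspan, ← finrank_span_eq_card hli]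
  let e := Fintype.equivOfCardEq hcard.symm
  refine ⟨e.toEmbedding.trans ⟨a, ha⟩, ?_⟩
  rw [← linearIndependent_rows_iff_isUnit]
  exact hli.comp e e.injective

theorem exists_submatrix_mul_eq_one_of_rank_eq_card (U : Matrix m n F)
    (hU : U.rank = Fintype.card n) : ∃ (r : n ↪ m) (A : Matrix n n F),
      (U * A).submatrix r id = 1 := by
  obtain ⟨r, hr⟩ := exists_submatrix_isUnit_of_rank_eq_card U hU
  exact ⟨r, (U.submatrix r id)⁻¹, mul_nonsing_inv _ ((isUnit_iff_isUnit_det _).mp hr)⟩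

end Rank

section Pivot

variable {R S m n p : Type*}

def IsPivot (r : p ↪ m) (s : p ↪ n) (e : m × n) : Prop :=
  e.1 ∈ Set.range r ∧ e.2 ∈ Set.range s

theorem card_isPivot [Finite m] [Finite n] (r : p ↪ m) (s : p ↪ n) :
    Nat.card {e // IsPivot r s e} = Nat.card p * Nat.card p := by
  rw [show Nat.card {e // IsPivot r s e} = Nat.card (Set.range r × Set.range s) from
    Nat.card_congr Equiv.subtypeProdEquivProd, Nat.card_prod,
    Nat.card_range_of_injective r.injective, Nat.card_range_of_injective s.injective]

open scoped Classical in
noncomputable def extendPivotRows [Zero S] [One S] (r : p ↪ m)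
    (W : Matrix {x // x ∉ Set.range r} p S) : Matrix m p S :=
  of fun x a => if h : x ∈ Set.range r then (if x = r a then 1 else 0) else W ⟨x, h⟩ a

open scoped Classical in
noncomputable def extendOffPivot [Zero S] (r : p ↪ m) (s : p ↪ n)
    (W : {e // ¬ IsPivot r s e} → S) : Matrix m n S :=
  of fun x y => if h : IsPivot r s (x, y) then 0 else W ⟨(x, y), h⟩

theorem map_extendPivotRows [NonAssocSemiring R] [NonAssocSemiring S] (f : R →+* S)
    (r : p ↪ m) (W : Matrix {x // x ∉ Set.range r} p R) :
    (extendPivotRows r W).map f = extendPivotRows r (W.map f) := by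
  ext x a
  simp only [extendPivotRows, map_apply, of_apply]
  split_ifs <;> simp

theorem map_extendOffPivot [NonAssocSemiring R] [NonAssocSemiring S] (f : R →+* S)
    (r : p ↪ m) (s : p ↪ n) (W : {e // ¬ IsPivot r s e} → R) :
    (extendOffPivot r s W).map f = extendOffPivot r s (f ∘ W) := by
  ext x y
  simp only [extendOffPivot, map_apply, of_apply]
  split_ifs <;> simp

theorem extendPivotRows_submatrix [Zero S] [One S] [DecidableEq p] {r : p ↪ m}
    {U : Matrix m p S} (hU : U.submatrix r id = 1) :
    extendPivotRows r (U.submatrix Subtype.val id) = U := by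
  have hU' : ∀ a' a, U (r a') a = (1 : Matrix p p S) a' a := fun a' a => congr_fun₂ hU a' a
  ext x a
  simp only [extendPivotRows, of_apply, submatrix_apply, id]
  split_ifs with hx hxa
  · rw [hxa, hU', one_apply_eq]
  · obtain ⟨a', rfl⟩ := hx
    rw [hU', one_apply_ne]
    exact fun h => hxa (h ▸ rfl)
  · rfl

theorem apply_eq_neg_of_conjTranspose_mul_mul_eq_zero [CommRing R] [StarRing R] [Fintype m]
    [Fintype n] [DecidableEq p] {r : p ↪ m} {s : p ↪ n} {U : Matrix m p R} {V : Matrix n p R}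
    {H : Matrix m n R} (hU : U.submatrix r id = 1) (hV : V.submatrix s id = 1)
    (hUHV : Uᴴ * H * V = 0) (a b : p) :
    H (r a) (s b) = -(Uᴴ * extendOffPivot r s (fun e => H e.1.1 e.1.2) * V) a b := by
  classical
  have hU' : ∀ a', U (r a') a = if a' = a then 1 else 0 := fun a' =>
    (congr_fun₂ hU a' a).trans one_apply
  have hV' : ∀ b', V (s b') b = if b' = b then 1 else 0 := fun b' =>
    (congr_fun₂ hV b' b).trans one_apply
  set Hpiv : Matrix m n R := of fun x y => if IsPivot r s (x, y) then H x y else 0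
  have hsplit : extendOffPivot r s (fun e => H e.1.1 e.1.2) + Hpiv = H := by
    ext x y
    simp only [extendOffPivot, Hpiv, add_apply, of_apply]
    split_ifs <;> simp
  -- the pivot rows of `U` and `V` are unit rows, so only the pivot entry `(r a, s b)` survives
  have hpiv : (Uᴴ * Hpiv * V) a b = H (r a) (s b) := by
    simp only [mul_apply, conjTranspose_apply, Finset.sum_mul]
    rw [Finset.sum_eq_single (s b), Finset.sum_eq_single (r a)]
    · simp [Hpiv, IsPivot, hU', hV']
    · rintro x - hx
      by_cases hxr : x ∈ Set.range r
      · obtain ⟨a', rfl⟩ := hxr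
        simp [hU', show a' ≠ a by rintro rfl; exact hx rfl]
      · have : ¬IsPivot r s (x, s b) := fun h => hxr h.1
        simp [Hpiv, this]
    · simp
    · rintro y - hy
      refine Finset.sum_eq_zero fun x _ => ?_
      by_cases hys : y ∈ Set.range s
      · obtain ⟨b', rfl⟩ := hys
        simp [hV', show b' ≠ b by rintro rfl; exact hy rfl]
      · have : ¬IsPivot r s (x, y) := fun h => hys h.2
        simp [Hpiv, this]
    · simp
  have := congr_fun₂ hUHV a b
  rw [← hsplit, Matrix.mul_add, Matrix.add_mul, add_apply, hpiv, zero_apply] at this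
  linear_combination this

end Pivot

end Matrix

namespace InterferenceAlignment

variable {K : ℕ} {M N : Fin K → ℕ} {d : ℕ}

abbrev Link (K : ℕ) : Type := {q : Fin K × Fin K // q.1 ≠ q.2}

abbrev ChannelEntry (M N : Fin K → ℕ) : Type := Σ q : Link K, Fin (N q.1.1) × Fin (M q.1.2)

variable (r : ∀ k, Fin d ↪ Fin (N k)) (s : ∀ k, Fin d ↪ Fin (M k))

abbrev ChartParam : Type :=
  (Σ k, {x : Fin (N k) // x ∉ Set.range (r k)} × Fin d) ⊕
  (Σ k, {y : Fin (M k) // y ∉ Set.range (s k)} × Fin d) ⊕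
  (Σ q : Link K, {e // ¬ IsPivot (r q.1.1) (s q.1.2) e})

noncomputable def chartDecoder (k : Fin K) :
    Matrix (Fin (N k)) (Fin d) (MvPolynomial (ChartParam r s) ℂ) :=
  extendPivotRows (r k) (of fun x a => X (.inl ⟨k, x, a⟩))

noncomputable def chartPrecoder (k : Fin K) :
    Matrix (Fin (M k)) (Fin d) (MvPolynomial (ChartParam r s) ℂ) :=
  extendPivotRows (s k) (of fun y b => X (.inr (.inl ⟨k, y, b⟩)))

noncomputable def chartChannel (q : Link K) :
    Matrix (Fin (N q.1.1)) (Fin (M q.1.2)) (MvPolynomial (ChartParam r s) ℂ) :=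
  extendOffPivot (r q.1.1) (s q.1.2) fun e => X (.inr (.inr ⟨q, e⟩))

open scoped Classical in
noncomputable def chartMap (v : ChannelEntry M N) : MvPolynomial (ChartParam r s) ℂ :=
  if h : IsPivot (r v.1.1.1) (s v.1.1.2) v.2 then
    -((chartDecoder r s v.1.1.1)ᵀ * chartChannel r s v.1 * chartPrecoder r s v.1.1.2)
      ((r v.1.1.1).invOfMemRange ⟨v.2.1, h.1⟩) ((s v.1.1.2).invOfMemRange ⟨v.2.2, h.2⟩)
  else chartChannel r s v.1 v.2.1 v.2.2

variable (U : ∀ k, Matrix (Fin (N k)) (Fin d) ℂ) (V : ∀ k, Matrix (Fin (M k)) (Fin d) ℂ)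
  (H : ∀ q : Link K, Matrix (Fin (N q.1.1)) (Fin (M q.1.2)) ℂ)

-- Decoder coordinates hold conjugated entries, because the alignment conditions involve `Uᴴ`.
noncomputable def chartPoint : ChartParam r s → ℂ :=
  Sum.elim (fun e => star (U e.1 e.2.1 e.2.2))
    (Sum.elim (fun e => V e.1 e.2.1 e.2.2) (fun e => H e.1 e.2.1.1 e.2.1.2))

variable {r s U V}

theorem map_chartDecoder (hU : ∀ k, (U k).submatrix (r k) id = 1) (k : Fin K) :
    (chartDecoder r s k).map (eval (chartPoint r s U V H)) = (U k).map star := by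
  have hUs : ((U k).map star).submatrix (r k) id = 1 := by
    rw [submatrix_map, hU k, Matrix.map_one _ (star_zero _) (star_one _)]
  rw [chartDecoder, map_extendPivotRows, ← extendPivotRows_submatrix hUs]
  congr 1
  ext x a
  simp [chartPoint]

theorem map_chartPrecoder (hV : ∀ k, (V k).submatrix (s k) id = 1) (k : Fin K) :
    (chartPrecoder r s k).map (eval (chartPoint r s U V H)) = V k := by
  rw [chartPrecoder, map_extendPivotRows]
  conv_rhs => rw [← extendPivotRows_submatrix (hV k)]
  congr 1
  ext y b
  simp [chartPoint]

theorem map_chartChannel (q : Link K) :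
    (chartChannel r s q).map (eval (chartPoint r s U V H))
      = extendOffPivot (r q.1.1) (s q.1.2) fun e => H q e.1.1 e.1.2 := by
  rw [chartChannel, map_extendOffPivot]
  simp only [Function.comp_def, eval_X, chartPoint, Sum.elim_inr]

theorem eval_chartMap (hU : ∀ k, (U k).submatrix (r k) id = 1)
    (hV : ∀ k, (V k).submatrix (s k) id = 1)
    (hUHV : ∀ q : Link K, (U q.1.1)ᴴ * H q * V q.1.2 = 0) (v : ChannelEntry M N) :
    eval (chartPoint r s U V H) (chartMap r s v) = H v.1 v.2.1 v.2.2 := by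
  obtain ⟨q, x, y⟩ := v
  rw [chartMap]
  split_ifs with h
  · dsimp only at h ⊢
    rw [map_neg, ← Matrix.map_apply (f := ⇑(eval (chartPoint r s U V H))), Matrix.map_mul,
      Matrix.map_mul, transpose_map, map_chartDecoder H hU, map_chartPrecoder H hV,
      map_chartChannel]
    have key := apply_eq_neg_of_conjTranspose_mul_mul_eq_zero (hU _) (hV _) (hUHV q)
      ((r _).invOfMemRange ⟨x, h.1⟩) ((s _).invOfMemRange ⟨y, h.2⟩)
    rw [Function.Embedding.left_inv_of_invOfMemRange,
      Function.Embedding.left_inv_of_invOfMemRange] at key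
    exact key.symm
  · rw [← Matrix.map_apply (f := ⇑(eval (chartPoint r s U V H))), map_chartChannel]
    simp [extendOffPivot, h]

theorem card_link_add (K : ℕ) : Nat.card (Link K) + K = K * K := by
  classical
  have hoffDiag : (Finset.univ : Finset (Fin K × Fin K)).filter (fun q => q.1 ≠ q.2)
      = (Finset.univ : Finset (Fin K)).offDiag := by
    ext; simp
  rw [Nat.card_eq_fintype_card, Fintype.card_subtype, hoffDiag, Finset.offDiag_card,
    Finset.card_univ, Fintype.card_fin, Nat.sub_add_cancel (Nat.le_mul_self K)]

theorem sum_card_compl_range_mul_add {n : Fin K → ℕ} (r : ∀ k, Fin d ↪ Fin (n k)) :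
    ∑ k, Nat.card {x // x ∉ Set.range (r k)} * d + K * (d * d) = (∑ k, n k) * d := by
  have hr k : Nat.card {x // x ∉ Set.range (r k)} + d = n k := by
    simpa using Nat.card_subtype_notMem_range_add (r k)
  simp_rw [Finset.sum_mul, ← hr, add_mul, Finset.sum_add_distrib]
  simp

variable (r s) in
theorem card_chartParam_add :
    Nat.card (ChartParam r s) + (K * K + K) * (d * d)
      = (∑ k, (M k + N k)) * d + Nat.card (ChannelEntry M N) := by
  have hchannel : ∑ q : Link K, Nat.card {e // ¬ IsPivot (r q.1.1) (s q.1.2) e}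
      + Nat.card (Link K) * (d * d) = ∑ q : Link K, N q.1.1 * M q.1.2 := by
    have hq (q : Link K) :
        Nat.card {e // ¬ IsPivot (r q.1.1) (s q.1.2) e} + d * d = N q.1.1 * M q.1.2 := by
      simpa [card_isPivot, add_comm] using
        Nat.card_subtype_add_card_subtype_not (IsPivot (r q.1.1) (s q.1.2))
    simp_rw [← hq, Finset.sum_add_distrib]
    simp [Nat.card_eq_fintype_card]
  have hlink : Nat.card (Link K) * (d * d) + K * (d * d) = K * K * (d * d) := by
    rw [← add_mul, card_link_add]
  rw [Nat.card_sum, Nat.card_sum, Nat.card_sigma, Nat.card_sigma, Nat.card_sigma,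
    Nat.card_sigma, Finset.sum_add_distrib]
  simp only [Nat.card_prod, Nat.card_eq_fintype_card (α := Fin _), Fintype.card_fin]
  linarith [sum_card_compl_range_mul_add r, sum_card_compl_range_mul_add s]

variable (r s) in
theorem card_chartParam_lt (hcount : ∑ k, (M k + N k) < K * (K + 1) * d) :
    #(ChartParam r s) < #(ChannelEntry M N) := by
  have hd : 0 < d := Nat.pos_of_ne_zero (by rintro rfl; simp at hcount)
  have hcount' := Nat.mul_lt_mul_of_pos_right hcount hd
  rw [← Nat.cast_card, ← Nat.cast_card, Nat.cast_lt]
  linarith [card_chartParam_add r s]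

theorem exists_normalized_solution (hU : ∀ k, (U k).rank = d) (hV : ∀ k, (V k).rank = d)
    (hUHV : ∀ q : Link K, (U q.1.1)ᴴ * H q * V q.1.2 = 0) :
    ∃ (r : ∀ k, Fin d ↪ Fin (N k)) (s : ∀ k, Fin d ↪ Fin (M k))
      (U' : ∀ k, Matrix (Fin (N k)) (Fin d) ℂ) (V' : ∀ k, Matrix (Fin (M k)) (Fin d) ℂ),
      (∀ k, (U' k).submatrix (r k) id = 1) ∧ (∀ k, (V' k).submatrix (s k) id = 1) ∧
      ∀ q : Link K, (U' q.1.1)ᴴ * H q * V' q.1.2 = 0 := by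
  choose r A hA using fun k =>
    exists_submatrix_mul_eq_one_of_rank_eq_card (U k) (by rw [hU, Fintype.card_fin])
  choose s B hB using fun k =>
    exists_submatrix_mul_eq_one_of_rank_eq_card (V k) (by rw [hV, Fintype.card_fin])
  refine ⟨r, s, fun k => U k * A k, fun k => V k * B k, hA, hB, fun q => ?_⟩
  calc (U q.1.1 * A q.1.1)ᴴ * H q * (V q.1.2 * B q.1.2)
      = (A q.1.1)ᴴ * ((U q.1.1)ᴴ * H q * V q.1.2) * B q.1.2 := by
        simp only [conjTranspose_mul, Matrix.mul_assoc]
    _ = 0 := by rw [hUHV q, Matrix.mul_zero, Matrix.zero_mul]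

end InterferenceAlignment

open InterferenceAlignment

theorem stmt_4_general (K : ℕ) (M N : Fin K → ℕ) (d : ℕ)
    (hcount : ∑ k, (M k + N k) < K * (K + 1) * d) :
    ∃ p : MvPolynomial
        (Σ q : {q : Fin K × Fin K // q.1 ≠ q.2}, Fin (N q.1.1) × Fin (M q.1.2)) ℂ,
      p ≠ 0 ∧
      ∀ H : ∀ q : {q : Fin K × Fin K // q.1 ≠ q.2},
          Matrix (Fin (N q.1.1)) (Fin (M q.1.2)) ℂ,
        MvPolynomial.eval (fun v => H v.1 v.2.1 v.2.2) p ≠ 0 →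
        ¬ ∃ (U : ∀ k, Matrix (Fin (N k)) (Fin d) ℂ)
            (V : ∀ k, Matrix (Fin (M k)) (Fin d) ℂ),
          (∀ k, (U k).rank = d) ∧ (∀ k, (V k).rank = d) ∧
          ∀ q : {q : Fin K × Fin K // q.1 ≠ q.2},
            (U q.1.1)ᴴ * H q * V q.1.2 = 0 := by
  classical
  choose P hP0 hP using fun rs : (∀ k, Fin d ↪ Fin (N k)) × (∀ k, Fin d ↪ Fin (M k)) =>
    exists_ne_zero_forall_eval_eq_zero_of_mk_lt (chartMap rs.1 rs.2)
      (card_chartParam_lt rs.1 rs.2 hcount)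
  refine ⟨∏ rs, P rs, Finset.prod_ne_zero_iff.2 fun rs _ => hP0 rs, ?_⟩
  rintro H hH ⟨U, V, hU, hV, hUHV⟩
  obtain ⟨r, s, U', V', hU', hV', hUHV'⟩ := exists_normalized_solution H hU hV hUHV
  apply hH
  rw [map_prod]
  refine Finset.prod_eq_zero (Finset.mem_univ (r, s)) ?_
  simpa only [eval_chartMap H hU' hV' hUHV'] using hP (r, s) (chartPoint r s U' V' H)

/-- **Corollary 1(a).** If all users have the same number of streams `d` and
`K(K+1)d > Σ_k (M_k + N_k)`, then interference alignment on all of `J` is generically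
impossible: some nonzero polynomial in the channel entries vanishes at every channel
realization admitting a linear interference-alignment solution. -/
theorem stmt_4 (K : ℕ) (hK : 2 ≤ K) (M N : Fin K → ℕ) (d : ℕ)
    (hd1 : 1 ≤ d) (hdM : ∀ k, d ≤ M k) (hdN : ∀ k, d ≤ N k)
    (hcount : ∑ k, (M k + N k) < K * (K + 1) * d) :
    ∃ p : MvPolynomial
        (Σ q : {q : Fin K × Fin K // q.1 ≠ q.2}, Fin (N q.1.1) × Fin (M q.1.2)) ℂ,
      p ≠ 0 ∧
      ∀ H : ∀ q : {q : Fin K × Fin K // q.1 ≠ q.2},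
          Matrix (Fin (N q.1.1)) (Fin (M q.1.2)) ℂ,
        MvPolynomial.eval (fun v => H v.1 v.2.1 v.2.2) p ≠ 0 →
        ¬ ∃ (U : ∀ k, Matrix (Fin (N k)) (Fin d) ℂ)
            (V : ∀ k, Matrix (Fin (M k)) (Fin d) ℂ),
          (∀ k, (U k).rank = d) ∧ (∀ k, (V k).rank = d) ∧
          ∀ q : {q : Fin K × Fin K // q.1 ≠ q.2},
            (U q.1.1)ᴴ * H q * V q.1.2 = 0 :=
  stmt_4_general K M N d hcount
end

section
/- Let K ≥ 2 and let M, N, d be positive integers with d ≤ M and d ≤ N. Set J := {(k,j) : 1 ≤ k, j ≤ K, k ≠ j}, and for I ⊆ J let π₁(I) and π₂(I) denote the sets of first and second indices occurring in I. Then the following are equivalent: (i) for every subset I ⊆ J, |I| · d ≤ |π₁(I)| · (M − d) + |π₂(I)| · (N − d); (ii) (K + 1) d ≤ M + N. -/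
/-- For a symmetric `K`-user system, the subset-counting properness
condition is equivalent to the single inequality `(K+1)d ≤ M + N`. -/
theorem stmt_11 (K M N d : ℕ) (hK : 2 ≤ K) (hd : 1 ≤ d) (hdM : d ≤ M) (hdN : d ≤ N) :
    (∀ I : Finset (Fin K × Fin K), (∀ q ∈ I, q.1 ≠ q.2) →
        I.card * d ≤ (I.image Prod.fst).card * (M - d)
          + (I.image Prod.snd).card * (N - d))
      ↔ (K + 1) * d ≤ M + N := by
  obtain ⟨e, rfl⟩ : ∃ e, K = e + 2 := ⟨K - 2, by omega⟩
  obtain ⟨m, rfl⟩ : ∃ m, M = d + m := ⟨M - d, by omega⟩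
  obtain ⟨n, rfl⟩ : ∃ n, N = d + n := ⟨N - d, by omega⟩
  have hnt : Nontrivial (Fin (e + 2)) := by
    rw [← Fintype.one_lt_card_iff_nontrivial, Fintype.card_fin]; omega
  constructor
  · intro h
    have hI := h (Finset.univ.offDiag)
      (fun q hq => (Finset.mem_offDiag.mp hq).2.2)
    have hcard : (Finset.univ.offDiag : Finset (Fin (e+2) × Fin (e+2))).card
        = (e + 2) * (e + 1) := by
      rw [Finset.offDiag_card, Finset.card_univ, Fintype.card_fin]
      have : (e + 2) * (e + 2) = (e + 2) * (e + 1) + (e + 2) := by ring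
      omega
    have hfst : ((Finset.univ.offDiag : Finset (Fin (e+2) × Fin (e+2))).image Prod.fst)
        = Finset.univ := by
      ext k
      simp only [Finset.mem_image, Finset.mem_univ, iff_true]
      obtain ⟨j, hj⟩ := exists_ne k
      exact ⟨(k, j), Finset.mem_offDiag.mpr ⟨Finset.mem_univ _, Finset.mem_univ _, hj.symm⟩, rfl⟩
    have hsnd : ((Finset.univ.offDiag : Finset (Fin (e+2) × Fin (e+2))).image Prod.snd)
        = Finset.univ := by
      ext k
      simp only [Finset.mem_image, Finset.mem_univ, iff_true]
      obtain ⟨j, hj⟩ := exists_ne k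
      exact ⟨(j, k), Finset.mem_offDiag.mpr ⟨Finset.mem_univ _, Finset.mem_univ _, hj⟩, rfl⟩
    rw [hcard, hfst, hsnd, Finset.card_univ, Fintype.card_fin] at hI
    simp only [Nat.add_sub_cancel_left] at hI
    -- hI : (e+2)*(e+1)*d ≤ (e+2)*m + (e+2)*n
    have h2 : (e + 1) * d ≤ m + n :=
      Nat.le_of_mul_le_mul_left
        (by calc (e + 2) * ((e + 1) * d) = (e + 2) * (e + 1) * d := by ring
              _ ≤ (e + 2) * m + (e + 2) * n := hI
              _ = (e + 2) * (m + n) := by ring)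
        (by omega)
    nlinarith [h2]
  · intro h I hne
    simp only [Nat.add_sub_cancel_left]
    by_cases hIe : I = ∅
    · simp [hIe]
    have h2 : (e + 1) * d ≤ m + n := by nlinarith [h]
    set A := I.image Prod.fst with hA
    set B := I.image Prod.snd with hB
    have hAne : A.Nonempty := (Finset.image_nonempty).mpr (Finset.nonempty_iff_ne_empty.mpr hIe)
    have hBne : B.Nonempty := (Finset.image_nonempty).mpr (Finset.nonempty_iff_ne_empty.mpr hIe)
    have ha1 : 1 ≤ A.card := Finset.card_pos.mpr hAne
    have hb1 : 1 ≤ B.card := Finset.card_pos.mpr hBne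
    have hDsub : (A ∩ B).image (fun x => (x, x)) ⊆ A ×ˢ B := by
      intro q hq
      obtain ⟨x, hx, rfl⟩ := Finset.mem_image.mp hq
      simp only [Finset.mem_product]
      exact ⟨(Finset.mem_inter.mp hx).1, (Finset.mem_inter.mp hx).2⟩
    have hD : ((A ∩ B).image fun x => (x, x)).card = (A ∩ B).card :=
      Finset.card_image_of_injective _ (fun x y hxy => by simpa using congrArg Prod.fst hxy)
    have hsub : I ⊆ (A ×ˢ B) \ ((A ∩ B).image fun x => (x, x)) := by
      intro q hq
      rw [Finset.mem_sdiff, Finset.mem_product]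
      refine ⟨⟨Finset.mem_image_of_mem _ hq, Finset.mem_image_of_mem _ hq⟩, ?_⟩
      intro hmem
      obtain ⟨x, _, hx⟩ := Finset.mem_image.mp hmem
      apply hne q hq
      rw [← hx]
    have hc : I.card + (A ∩ B).card ≤ A.card * B.card := by
      have h1 := Finset.card_le_card hsub
      rw [Finset.card_sdiff_of_subset hDsub, hD, Finset.card_product] at h1
      have h3 := Finset.card_le_card hDsub
      rw [hD, Finset.card_product] at h3
      omega
    have ht : A.card + B.card = (A ∩ B).card + (A ∪ B).card := by
      rw [Finset.card_inter_add_card_union]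
    have huK : (A ∪ B).card ≤ e + 2 := by
      calc (A ∪ B).card ≤ (Finset.univ : Finset (Fin (e+2))).card :=
            Finset.card_le_card (Finset.subset_univ _)
        _ = e + 2 := by rw [Finset.card_univ, Fintype.card_fin]
    have haK : A.card ≤ e + 2 := by
      calc A.card ≤ (Finset.univ : Finset (Fin (e+2))).card :=
            Finset.card_le_card (Finset.subset_univ _)
        _ = e + 2 := by rw [Finset.card_univ, Fintype.card_fin]
    have hbK : B.card ≤ e + 2 := by
      calc B.card ≤ (Finset.univ : Finset (Fin (e+2))).card :=
            Finset.card_le_card (Finset.subset_univ _)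
        _ = e + 2 := by rw [Finset.card_univ, Fintype.card_fin]
    rcases le_total A.card B.card with hab | hab
    · have hkey : I.card ≤ A.card * (e + 1) := by nlinarith [hc, ht, huK, hbK, ha1]
      calc I.card * d ≤ A.card * (e + 1) * d := Nat.mul_le_mul_right _ hkey
        _ = A.card * ((e + 1) * d) := by ring
        _ ≤ A.card * (m + n) := Nat.mul_le_mul_left _ h2
        _ = A.card * m + A.card * n := by ring
        _ ≤ A.card * m + B.card * n := by
            exact Nat.add_le_add_left (Nat.mul_le_mul_right _ hab) _
    · have hkey : I.card ≤ B.card * (e + 1) := by nlinarith [hc, ht, huK, haK, hb1]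
      calc I.card * d ≤ B.card * (e + 1) * d := Nat.mul_le_mul_right _ hkey
        _ = B.card * ((e + 1) * d) := by ring
        _ ≤ B.card * (m + n) := Nat.mul_le_mul_left _ h2
        _ = B.card * m + B.card * n := by ring
        _ ≤ A.card * m + B.card * n := by
            exact Nat.add_le_add_right (Nat.mul_le_mul_right _ hab) _
end

section
/- Let K ≥ 2, d ≥ 1, and let M_k, N_k (1 ≤ k ≤ K) be positive integers divisible by d with M_k ≥ d and N_k ≥ d, satisfying: for every subset I ⊆ J, |I| · d ≤ Σ_{k ∈ π₁(I)} (N_k − d) + Σ_{j ∈ π₂(I)} (M_j − d). Then there exist matrices H³_{kj} ∈ ℂ^{(N_k − d) × d} and H²_{kj} ∈ ℂ^{d × (M_j − d)} for all (k,j) ∈ J such that the ℂ-linear map sending the tuple of matrices ((W_k)_{k=1}^{K}, (V̄_j)_{j=1}^{K}), with W_k ∈ ℂ^{d × (N_k − d)} and V̄_j ∈ ℂ^{(M_j − d) × d}, to the tuple (W_k H³_{kj} + H²_{kj} V̄_j)_{(k,j) ∈ J} ∈ ∏_{(k,j) ∈ J} ℂ^{d × d}, is surjective. -/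
/-! Cut the columns of each `W_k` and the rows of each `V̄_j` into blocks of `d`, giving
`(N_k - d)/d` and `(M_j - d)/d` blocks. Divided by `d`, the properness condition is Hall's
condition for giving every pair `(k, j) ∈ J` a block of its own, chosen among the blocks of `W_k`
or of `V̄_j`. Let `H³_{kj}` (resp. `H²_{kj}`) pick out the block assigned to `(k, j)` and be zero
otherwise. Then the `(k, j)`-component of the map is that block, and distinct pairs read
distinct blocks, so any target is reached by putting each prescribed matrix into its block. -/

open Matrix Finset Function

section Slots

variable {ι κ : Type*} {P Q : κ → Type*}

/-- `g q` picks a block of `W_{s q}` or of `V̄_{t q}`; injectivity of `slotOf s t g` says that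
no block is picked twice. -/
def slotOf (s t : ι → κ) (g : ∀ q, P (s q) ⊕ Q (t q)) (q : ι) : (Σ k, P k) ⊕ (Σ j, Q j) :=
  Sum.map (Sigma.mk (s q)) (Sigma.mk (t q)) (g q)

theorem exists_injective_slotOf [DecidableEq κ] [∀ k, Fintype (P k)] [∀ k, Fintype (Q k)]
    (s t : ι → κ)
    (hcap : ∀ S : Finset ι,
      #S ≤ ∑ k ∈ S.image s, Fintype.card (P k) + ∑ j ∈ S.image t, Fintype.card (Q j)) :
    ∃ g : ∀ q, P (s q) ⊕ Q (t q), Injective (slotOf s t g) := by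
  classical
  let slots : ι → Finset ((Σ k, P k) ⊕ (Σ j, Q j)) := fun q =>
    (({s q} : Finset κ).sigma fun _ => univ).disjSum (({t q} : Finset κ).sigma fun _ => univ)
  have hunion : ∀ S : Finset ι, S.biUnion slots =
      ((S.image s).sigma fun _ => univ).disjSum ((S.image t).sigma fun _ => univ) := by
    intro S
    ext (⟨k, i⟩ | ⟨j, i⟩) <;> simp [slots, eq_comm]
  obtain ⟨f, hf, hfslot⟩ := (all_card_le_biUnion_card_iff_exists_injective slots).mp fun S => by
    simpa [hunion, card_sigma] using hcap S
  have hlift : ∀ q, ∃ x : P (s q) ⊕ Q (t q), Sum.map (Sigma.mk (s q)) (Sigma.mk (t q)) x = f q := by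
    intro q
    have hq := hfslot q
    rcases hfq : f q with ⟨k, i⟩ | ⟨j, i⟩ <;> simp [hfq, slots] at hq <;> subst hq
    exacts [⟨.inl i, rfl⟩, ⟨.inr i, rfl⟩]
  choose g hg using hlift
  exact ⟨g, by rwa [show slotOf s t g = f from funext hg]⟩

theorem surjective_mul_add_mul_of_injective_slotOf {R m n : Type*} [Semiring R]
    {cW cV : κ → Type*} [∀ k, Fintype (cW k)] [∀ k, DecidableEq (cW k)]
    [∀ j, Fintype (cV j)] [∀ j, DecidableEq (cV j)]
    (s t : ι → κ) (eW : ∀ k, P k × n ≃ cW k) (eV : ∀ j, Q j × m ≃ cV j)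
    (g : ∀ q, P (s q) ⊕ Q (t q)) (hg : Injective (slotOf s t g)) :
    ∃ (H3 : ∀ q, Matrix (cW (s q)) n R) (H2 : ∀ q, Matrix m (cV (t q)) R),
      Surjective fun WV : (∀ k, Matrix m (cW k) R) × (∀ j, Matrix (cV j) n R) =>
        fun q => WV.1 (s q) * H3 q + H2 q * WV.2 (t q) := by
  refine ⟨fun q => (g q).elim (fun i => (1 : Matrix _ _ R).submatrix id fun b => eW _ (i, b)) 0,
    fun q => (g q).elim 0 (fun i => (1 : Matrix _ _ R).submatrix (fun a => eV _ (i, a)) id), ?_⟩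
  intro T
  let X := extend (slotOf s t g) T 0
  refine ⟨(fun k => of fun r c => X (.inl ⟨k, ((eW k).symm c).1⟩) r ((eW k).symm c).2,
    fun j => of fun c b => X (.inr ⟨j, ((eV j).symm c).1⟩) ((eV j).symm c).2 b), ?_⟩
  funext q
  have hX : X (slotOf s t g q) = T q := hg.extend_apply T 0 q
  rcases hgq : g q with i | i <;> ext r b <;> simp [← hX, slotOf, hgq, mul_apply, one_apply]

end Slots

theorem le_sum_div_add_sum_div {α : Type*} {d c : ℕ} (hd : 0 < d) {s t : Finset α}
    {a b : α → ℕ} (ha : ∀ k ∈ s, d ∣ a k) (hb : ∀ j ∈ t, d ∣ b j)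
    (h : c * d ≤ ∑ k ∈ s, a k + ∑ j ∈ t, b j) :
    c ≤ ∑ k ∈ s, a k / d + ∑ j ∈ t, b j / d := by
  refine Nat.le_of_mul_le_mul_right ?_ hd
  rwa [add_mul, sum_mul, sum_mul, sum_congr rfl fun k hk => Nat.div_mul_cancel (ha k hk),
    sum_congr rfl fun j hj => Nat.div_mul_cancel (hb j hj)]

theorem stmt_19_general (K d : ℕ) (hd : 1 ≤ d) (M N : Fin K → ℕ)
    (hMdvd : ∀ k, d ∣ M k) (hNdvd : ∀ k, d ∣ N k)
    (hproper : ∀ I : Finset (Fin K × Fin K), (∀ q ∈ I, q.1 ≠ q.2) →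
      I.card * d ≤ ∑ k ∈ I.image Prod.fst, (N k - d)
        + ∑ j ∈ I.image Prod.snd, (M j - d)) :
    ∃ (H3 : ∀ q : {q : Fin K × Fin K // q.1 ≠ q.2},
        Matrix (Fin (N q.1.1 - d)) (Fin d) ℂ)
      (H2 : ∀ q : {q : Fin K × Fin K // q.1 ≠ q.2},
        Matrix (Fin d) (Fin (M q.1.2 - d)) ℂ),
      Function.Surjective
        (fun (WV : (∀ k, Matrix (Fin d) (Fin (N k - d)) ℂ) ×
            (∀ j, Matrix (Fin (M j - d)) (Fin d) ℂ)) =>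
          fun q : {q : Fin K × Fin K // q.1 ≠ q.2} =>
            WV.1 q.1.1 * H3 q + H2 q * WV.2 q.1.2) := by
  have hWdvd k : d ∣ N k - d := Nat.dvd_sub (hNdvd k) dvd_rfl
  have hVdvd j : d ∣ M j - d := Nat.dvd_sub (hMdvd j) dvd_rfl
  have eW k : Fin ((N k - d) / d) × Fin d ≃ Fin (N k - d) :=
    finProdFinEquiv.trans (finCongr (Nat.div_mul_cancel (hWdvd k)))
  have eV j : Fin ((M j - d) / d) × Fin d ≃ Fin (M j - d) :=
    finProdFinEquiv.trans (finCongr (Nat.div_mul_cancel (hVdvd j)))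
  obtain ⟨g, hg⟩ := exists_injective_slotOf (P := fun k => Fin ((N k - d) / d))
      (Q := fun j => Fin ((M j - d) / d)) (fun q : {q : Fin K × Fin K // q.1 ≠ q.2} => q.1.1)
      (fun q => q.1.2) fun S => by
    have hS := hproper (S.map (Embedding.subtype _)) fun q hq => by
      obtain ⟨q, -, rfl⟩ := mem_map.1 hq
      exact q.2
    rw [card_map, map_eq_image, image_image, image_image] at hS
    simp only [Fintype.card_fin]
    exact le_sum_div_add_sum_div hd (fun k _ => hWdvd k) (fun j _ => hVdvd j) hS
  exact surjective_mul_add_mul_of_injective_slotOf _ _ eW eV g hg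

/-- **core construction in the proof of Theorem 2.** Under the properness
condition, one can choose the blocks `H³_{kj}` and `H²_{kj}` so that the linear map
`((W_k), (V̄_j)) ↦ (W_k H³_{kj} + H²_{kj} V̄_j)_{(k,j) ∈ J}` is surjective. -/
theorem stmt_19 (K d : ℕ) (hK : 2 ≤ K) (hd : 1 ≤ d) (M N : Fin K → ℕ)
    (hMd : ∀ k, d ≤ M k) (hNd : ∀ k, d ≤ N k)
    (hMdvd : ∀ k, d ∣ M k) (hNdvd : ∀ k, d ∣ N k)
    (hproper : ∀ I : Finset (Fin K × Fin K), (∀ q ∈ I, q.1 ≠ q.2) →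
      I.card * d ≤ ∑ k ∈ I.image Prod.fst, (N k - d)
        + ∑ j ∈ I.image Prod.snd, (M j - d)) :
    ∃ (H3 : ∀ q : {q : Fin K × Fin K // q.1 ≠ q.2},
        Matrix (Fin (N q.1.1 - d)) (Fin d) ℂ)
      (H2 : ∀ q : {q : Fin K × Fin K // q.1 ≠ q.2},
        Matrix (Fin d) (Fin (M q.1.2 - d)) ℂ),
      Function.Surjective
        (fun (WV : (∀ k, Matrix (Fin d) (Fin (N k - d)) ℂ) ×
            (∀ j, Matrix (Fin (M j - d)) (Fin d) ℂ)) =>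
          fun q : {q : Fin K × Fin K // q.1 ≠ q.2} =>
            WV.1 q.1.1 * H3 q + H2 q * WV.2 q.1.2) :=
  stmt_19_general K d hd M N hMdvd hNdvd hproper
end
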